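/- arXiv:2407.04535 — 8 statements merged into one kernel-verified Lean document; each statement's English description precedes it below -/
import Mathlib

section
/- Let n ∈ ℕ and let Δ₊≤n be the wide subcategory of the n-truncated simplex category whose morphisms are the monomorphisms. For every w : Fin (n+1) → Bool, the assignment declaring a sieve S on [k] to be covering if and only if every morphism f : [l] ⟶ [k] with w l = false belongs to S, defines a Grothendieck topology J_w on Δ₊≤n; moreover the map w ↦ J_w is a bijection from Fin (n+1) → Bool onto the set of all Grothendieck topologies on Δ₊≤n. In particular Δ₊≤n carries exactly 2^(n+1) Grothendieck topologies. -/
/-!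
In Δ₊≤n only identities are split epi, so the arrows into `X` that are not split epi form its
boundary sieve, and they all come from simplices of lower dimension. Given a topology `J`, let
`P_J` be the set of objects whose boundary does not `J`-cover. Pulling a `J`-covering sieve back
to an object of `P_J` gives a covering sieve that is not contained in the boundary, hence one
containing the identity: so `J`-covering sieves contain every arrow out of `P_J`. Conversely, by
induction on the dimension, a sieve containing every arrow out of `P_J` is `J`-covering: over an
object outside `P_J` the boundary covers, and over each boundary arrow the sieve covers by
induction. Hence `J` is the topology determined by `P_J`, and `P_J` is recovered from that
topology because the boundary of `X` covers exactly when `X ∉ P_J`.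
-/

open CategoryTheory Simplicial Opposite

/-- The `n`-truncated semi-simplex category: the wide subcategory of the `n`-truncated
simplex category whose morphisms are the monomorphisms. -/
abbrev TruncSemiSimplexCat (n : ℕ) : Type :=
  WideSubcategory (MorphismProperty.monomorphisms (SimplexCategory.Truncated n))

namespace CategoryTheory

variable {C : Type*} [Category C]

lemma IsSplitEpi.of_comp {X Y Z : C} (f : X ⟶ Y) (g : Y ⟶ Z) [IsSplitEpi (f ≫ g)] :
    IsSplitEpi g :=
  IsSplitEpi.mk' ⟨section_ (f ≫ g) ≫ f, by simp⟩

def Sieve.nonSplitEpi (X : C) : Sieve X where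
  arrows _ f := ¬ IsSplitEpi f
  downward_closed {_ _} _ hf g _ := hf (IsSplitEpi.of_comp g _)

lemma Sieve.le_nonSplitEpi {X : C} {S : Sieve X} (h : ¬ S (𝟙 X)) : S ≤ Sieve.nonSplitEpi X :=
  fun _ f hf _ => h (by simpa using S.downward_closed hf (section_ f))

namespace GrothendieckTopology

def ofObjectProperty (P : ObjectProperty C) : GrothendieckTopology C where
  sieves X := {S | ∀ (Y : C) (f : Y ⟶ X), P Y → S f}
  top_mem' _ _ _ _ := True.intro
  pullback_stable' _ _ _ f hS _ g hg := hS _ (g ≫ f) hg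
  transitive' _ _ hS _ hR _ f hf := by simpa using hR (hS _ f hf) _ (𝟙 _) hf

lemma nonSplitEpi_mem_ofObjectProperty_iff (hmono : ∀ {X Y : C} (f : X ⟶ Y), Mono f)
    {P : ObjectProperty C} [P.IsClosedUnderIsomorphisms] {X : C} :
    Sieve.nonSplitEpi X ∈ ofObjectProperty P X ↔ ¬ P X := by
  refine ⟨fun h hX => h X (𝟙 X) hX inferInstance, fun hX Y f hY _ => hX ?_⟩
  have := hmono f
  have := isIso_of_mono_of_isSplitEpi f
  exact P.prop_of_iso (asIso f) hY

lemma le_ofObjectProperty_nonSplitEpi_notMem (J : GrothendieckTopology C) :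
    J ≤ ofObjectProperty (fun X => Sieve.nonSplitEpi X ∉ J X) := by
  intro X S hS Y f hY
  by_contra hf
  exact hY (J.superset_covering (Sieve.le_nonSplitEpi (by simpa using hf))
    (J.pullback_stable f hS))

lemma ofObjectProperty_nonSplitEpi_notMem_le {r : C → C → Prop} (hwf : WellFounded r)
    (hr : ∀ {X Y : C} (f : Y ⟶ X), ¬ IsSplitEpi f → r Y X) (J : GrothendieckTopology C) :
    ofObjectProperty (fun X => Sieve.nonSplitEpi X ∉ J X) ≤ J := by
  intro X
  induction X using hwf.induction with
  | _ X ih =>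
    intro S hS
    by_cases hX : Sieve.nonSplitEpi X ∈ J X
    · refine J.transitive hX S fun Y f hf => ih Y (hr f hf) ?_
      exact fun Z g hZ => hS Z (g ≫ f) hZ
    · rw [Sieve.id_mem_iff_eq_top.mp (hS X (𝟙 X) hX)]
      exact J.top_mem X

theorem eq_ofObjectProperty_nonSplitEpi_notMem {r : C → C → Prop} (hwf : WellFounded r)
    (hr : ∀ {X Y : C} (f : Y ⟶ X), ¬ IsSplitEpi f → r Y X) (J : GrothendieckTopology C) :
    J = ofObjectProperty (fun X => Sieve.nonSplitEpi X ∉ J X) :=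
  le_antisymm J.le_ofObjectProperty_nonSplitEpi_notMem
    (ofObjectProperty_nonSplitEpi_notMem_le hwf hr J)

end GrothendieckTopology

end CategoryTheory

namespace SimplexCategory.Truncated

-- Monomorphisms of `SimplexCategory` are detected by maps out of `⦋0⦌`, which is `n`-truncated.
instance {n : ℕ} : (inclusion n).PreservesMonomorphisms where
  preserves {x y} f _ := by
    rw [mono_iff_injective]
    intro i j hij
    let pt : Truncated n := ⟨⦋0⦌, Nat.zero_le n⟩
    have hconst : (ObjectProperty.homMk (const ⦋0⦌ x.obj i) : pt ⟶ x) =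
        ObjectProperty.homMk (const ⦋0⦌ x.obj j) := by
      rw [← cancel_mono f]
      ext : 2
      exact congrArg (fun k => ⇑(const ⦋0⦌ y.obj k).toOrderHom) hij
    exact congrArg (fun g => g.hom.toOrderHom 0) hconst

end SimplexCategory.Truncated

namespace TruncSemiSimplexCat

variable {n : ℕ}

def len (X : TruncSemiSimplexCat n) : Fin (n + 1) :=
  ⟨X.obj.obj.len, Nat.lt_succ_of_le X.obj.property⟩

def mk (l : Fin (n + 1)) : TruncSemiSimplexCat n :=
  ⟨⟨⦋l⦌, Nat.le_of_lt_succ l.2⟩⟩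

@[simp]
lemma len_mk (l : Fin (n + 1)) : (mk l).len = l := rfl

lemma ext_len {X Y : TruncSemiSimplexCat n} (h : X.len = Y.len) : X = Y := by
  obtain ⟨⟨x, hx⟩⟩ := X
  obtain ⟨⟨y, hy⟩⟩ := Y
  obtain rfl : x = y := SimplexCategory.ext (congrArg Fin.val h)
  rfl

lemma mk_len (X : TruncSemiSimplexCat n) : mk X.len = X :=
  ext_len (len_mk _)

lemma mono {X Y : TruncSemiSimplexCat n} (f : X ⟶ Y) : Mono f :=
  (wideSubcategoryInclusion _).mono_of_mono_map f.2

instance {X Y : TruncSemiSimplexCat n} (f : X ⟶ Y) : Mono f.hom.hom :=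
  have : Mono f.hom := f.2
  (SimplexCategory.Truncated.inclusion n).map_mono f.hom

lemma len_le {X Y : TruncSemiSimplexCat n} (f : X ⟶ Y) : X.len ≤ Y.len :=
  SimplexCategory.len_le_of_mono f.hom.hom

lemma eq_id {X : TruncSemiSimplexCat n} (f : X ⟶ X) : f = 𝟙 X :=
  WideSubcategory.hom_ext _ (ObjectProperty.hom_ext _ (SimplexCategory.eq_id_of_mono _))

lemma len_lt_of_not_isSplitEpi {X Y : TruncSemiSimplexCat n} (f : Y ⟶ X) (hf : ¬ IsSplitEpi f) :
    Y.len < X.len := by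
  refine (len_le f).lt_of_ne fun h => hf ?_
  obtain rfl := ext_len h
  rw [eq_id f]
  infer_instance

lemma len_eq_of_iso {X Y : TruncSemiSimplexCat n} (e : X ≅ Y) : X.len = Y.len :=
  (len_le e.hom).antisymm (len_le e.inv)

open GrothendieckTopology

def topology (w : Fin (n + 1) → Bool) : GrothendieckTopology (TruncSemiSimplexCat n) :=
  ofObjectProperty fun Y => w Y.len = false

instance (w : Fin (n + 1) → Bool) :
    ObjectProperty.IsClosedUnderIsomorphisms fun Y : TruncSemiSimplexCat n => w Y.len = false :=
  ⟨fun e h => len_eq_of_iso e ▸ h⟩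

lemma nonSplitEpi_mem_topology_iff (w : Fin (n + 1) → Bool) (l : Fin (n + 1)) :
    Sieve.nonSplitEpi (mk l) ∈ topology w (mk l) ↔ w l = true := by
  simp [topology, nonSplitEpi_mem_ofObjectProperty_iff mono]

open Classical in
lemma eq_topology (J : GrothendieckTopology (TruncSemiSimplexCat n)) :
    J = topology fun l => decide (Sieve.nonSplitEpi (mk l) ∈ J (mk l)) := by
  refine (eq_ofObjectProperty_nonSplitEpi_notMem (InvImage.wf len wellFounded_lt)
    len_lt_of_not_isSplitEpi J).trans (congrArg ofObjectProperty (funext fun Y => ?_))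
  rw [decide_eq_false_iff_not, mk_len]

theorem topology_bijective : Function.Bijective (topology (n := n)) :=
  ⟨fun w w' h => funext fun l => Bool.eq_iff_iff.mpr <| by
      rw [← nonSplitEpi_mem_topology_iff, ← nonSplitEpi_mem_topology_iff, h],
    fun J => ⟨_, (eq_topology J).symm⟩⟩

end TruncSemiSimplexCat

theorem stmt3 (n : ℕ) :
    ∃ T : (Fin (n + 1) → Bool) → GrothendieckTopology (TruncSemiSimplexCat n),
      (∀ (w : Fin (n + 1) → Bool) (X : TruncSemiSimplexCat n) (S : Sieve X),
        S ∈ T w X ↔ ∀ (Y : TruncSemiSimplexCat n) (f : Y ⟶ X),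
          w ⟨Y.obj.obj.len, Nat.lt_succ_of_le Y.obj.property⟩ = false → S.arrows f) ∧
      Function.Bijective T ∧
      Nat.card (GrothendieckTopology (TruncSemiSimplexCat n)) = 2 ^ (n + 1) := by
  refine ⟨TruncSemiSimplexCat.topology, fun _ _ _ => Iff.rfl,
    TruncSemiSimplexCat.topology_bijective, ?_⟩
  rw [← Nat.card_eq_of_bijective _ TruncSemiSimplexCat.topology_bijective]
  simp
end

section
/- Let n ∈ ℕ. For every m with 0 ≤ m ≤ n+1, the assignment declaring a sieve S on [k] to be covering if and only if every morphism f : [l] ⟶ [k] with l < m belongs to S, defines a Grothendieck topology J_m on the n-truncated simplex category; moreover the map m ↦ J_m is a bijection from {0, 1, …, n+1} onto the set of all Grothendieck topologies on the n-truncated simplex category. In particular the n-truncated simplex category carries exactly n+2 Grothendieck topologies. -/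
open CategoryTheory Simplicial

/-!
A Grothendieck topology `J` on the truncated simplex category is determined by the least `m`
for which the boundary sieve of `[m]` is `J`-covering (`m = n + 1` if there is none). Pulling back
along a surjection `[k] ⟶ [m]` shows that the boundary of every `[k]` with `k ≥ m` then covers,
and an induction on dimension, factoring each non-surjection through a face, gives `J_m ≤ J`, where `J_m = lenTopology n m`.
Conversely, if a covering sieve misses some `f : [l] ⟶ [k]`, its pullback along `f` contains no
surjection, because surjections split; so the boundary of `[l]` covers and `l ≥ m`, i.e. `J ≤ J_m`.
-/

namespace SimplexCategory.Truncated

variable {n : ℕ}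

lemma not_surjective_of_len_lt {Y X : Truncated n} (f : Y ⟶ X) (h : Y.obj.len < X.obj.len) :
    ¬ Function.Surjective f.hom.toOrderHom := fun hf => by
  have := Fintype.card_le_of_surjective _ hf
  simp only [Fintype.card_fin] at this
  omega

lemma exists_surjective_of_len_le {X Y : Truncated n} (h : Y.obj.len ≤ X.obj.len) :
    ∃ g : X ⟶ Y, Function.Surjective g.hom.toOrderHom := by
  refine ⟨ObjectProperty.homMk (Hom.mk
    ⟨fun i => ⟨min i Y.obj.len, by omega⟩, fun a b hab => by simpa using Or.inl hab⟩), ?_⟩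
  intro j
  refine ⟨⟨j, by omega⟩, Fin.ext ?_⟩
  change min (j : ℕ) Y.obj.len = j
  omega

lemma exists_comp_eq_of_not_surjective {Y X : Truncated n} (h : Y ⟶ X)
    (hh : ¬ Function.Surjective h.hom.toOrderHom) :
    ∃ (Z : Truncated n) (_ : Z.obj.len < X.obj.len) (g : Y ⟶ Z) (i : Z ⟶ X), g ≫ i = h := by
  obtain ⟨⟨_ | k⟩, hX⟩ := X
  · exact absurd (fun _ => ⟨0, Subsingleton.elim (α := Fin 1) _ _⟩) hh
  obtain ⟨i, θ, hθ⟩ := eq_comp_δ_of_not_surjective h.hom hh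
  exact ⟨⟨⦋k⦌, by simp at hX ⊢; omega⟩, by simp, ObjectProperty.homMk θ,
    ObjectProperty.homMk (SimplexCategory.δ i), InducedCategory.hom_ext hθ.symm⟩

lemma exists_section_of_surjective {Z Y : Truncated n} (g : Z ⟶ Y)
    (hg : Function.Surjective g.hom.toOrderHom) : ∃ s : Y ⟶ Z, s ≫ g = 𝟙 Y := by
  have : Epi g.hom := epi_iff_surjective.mpr hg
  have := isSplitEpi_of_epi g.hom
  exact ⟨ObjectProperty.homMk (section_ g.hom), InducedCategory.hom_ext (IsSplitEpi.id g.hom)⟩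

-- The sieve generated by the boundary `∂Δ[k] ⊂ Δ[k]` of `X = [k]`.
def boundarySieve (X : Truncated n) : Sieve X where
  arrows _ f := ¬ Function.Surjective f.hom.toOrderHom
  downward_closed {_ _} _ hf g hgf := hf fun x =>
    let ⟨y, hy⟩ := hgf x
    ⟨g.hom.toOrderHom y, hy⟩

variable (n) in
def lenTopology (m : ℕ) : GrothendieckTopology (Truncated n) where
  sieves X := {S | ∀ (Y : Truncated n) (f : Y ⟶ X), Y.obj.len < m → S f}
  top_mem' _ _ _ _ := trivial
  pullback_stable' _ _ _ g hS Z f hZ := hS Z (f ≫ g) hZ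
  transitive' _ _ hS _ hR Y f hY := by simpa using hR (hS Y f hY) Y (𝟙 Y) hY

lemma boundarySieve_mem_lenTopology_iff {m : ℕ} {X : Truncated n} :
    boundarySieve X ∈ lenTopology n m X ↔ m ≤ X.obj.len :=
  ⟨fun h => not_lt.mp fun hX => h X (𝟙 X) hX fun x => ⟨x, rfl⟩,
    fun h Y f hY => not_surjective_of_len_lt f (by omega)⟩

lemma le_of_lenTopology_le {a b : ℕ} (hb : b ≤ n + 1) (h : lenTopology n a ≤ lenTopology n b) :
    b ≤ a := by
  by_contra! hab
  let X : Truncated n := ⟨⦋a⦌, by simp; omega⟩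
  have hX : boundarySieve X ∈ lenTopology n a X := boundarySieve_mem_lenTopology_iff.mpr le_rfl
  exact absurd (boundarySieve_mem_lenTopology_iff.mp (h X hX)) (by simp [X]; omega)

section

variable (J : GrothendieckTopology (Truncated n))

-- Surjections in the simplex category split, so `f^* S` contains no surjection.
lemma boundarySieve_mem_of_not_mem {X Y : Truncated n} {S : Sieve X} (hS : S ∈ J X) (f : Y ⟶ X)
    (hf : ¬ S f) : boundarySieve Y ∈ J Y := by
  refine J.superset_covering ?_ (J.pullback_stable f hS)
  intro Z g hg hsurj
  obtain ⟨s, hs⟩ := exists_section_of_surjective g hsurj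
  exact hf (by simpa [← Category.assoc, hs] using S.downward_closed hg s)

lemma boundarySieve_mem_of_len_le {W X : Truncated n} (hW : boundarySieve W ∈ J W)
    (h : W.obj.len ≤ X.obj.len) : boundarySieve X ∈ J X := by
  obtain ⟨g, hg⟩ := exists_surjective_of_len_le h
  refine J.superset_covering ?_ (J.pullback_stable g hW)
  intro Y f hf hsurj
  exact hf (hg.comp hsurj)

lemma lenTopology_le {m : ℕ} (h : ∀ X : Truncated n, m ≤ X.obj.len → boundarySieve X ∈ J X) :
    lenTopology n m ≤ J := by
  intro X S hS
  induction hk : X.obj.len using Nat.strong_induction_on generalizing X S with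
  | _ k ih =>
    by_cases hX : X.obj.len < m
    · rw [Sieve.id_mem_iff_eq_top.mp (hS X (𝟙 X) hX)]
      exact J.top_mem X
    refine J.transitive (h X (not_lt.mp hX)) S fun Y f hf => ?_
    obtain ⟨Z, hZ, g, i, rfl⟩ := exists_comp_eq_of_not_surjective f hf
    rw [Sieve.pullback_comp]
    exact J.pullback_stable g (ih _ (hk ▸ hZ) Z ((lenTopology n m).pullback_stable i hS) rfl)

lemma le_lenTopology {m : ℕ} (h : ∀ Y : Truncated n, Y.obj.len < m → boundarySieve Y ∉ J Y) :
    J ≤ lenTopology n m :=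
  fun _ _ hS Y f hY => by_contra fun hf => h Y hY (boundarySieve_mem_of_not_mem J hS f hf)

lemma exists_eq_lenTopology : ∃ m ≤ n + 1, J = lenTopology n m := by
  classical
  have hP : ∃ m, ∀ X : Truncated n, m ≤ X.obj.len → boundarySieve X ∈ J X :=
    ⟨n + 1, fun X hX => absurd X.property (by omega)⟩
  refine ⟨Nat.find hP, Nat.find_le fun X hX => absurd X.property (by omega),
    le_antisymm (le_lenTopology J fun Y hY hYJ => ?_) (lenTopology_le J (Nat.find_spec hP))⟩
  exact Nat.find_min hP hY fun X hX => boundarySieve_mem_of_len_le J hYJ hX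

end

end SimplexCategory.Truncated

open SimplexCategory.Truncated in
theorem stmt4 (n : ℕ) :
    ∃ T : Fin (n + 2) → GrothendieckTopology (SimplexCategory.Truncated n),
      (∀ (m : Fin (n + 2)) (X : SimplexCategory.Truncated n) (S : Sieve X),
        S ∈ T m X ↔ ∀ (Y : SimplexCategory.Truncated n) (f : Y ⟶ X),
          Y.obj.len < (m : ℕ) → S.arrows f) ∧
      Function.Bijective T ∧
      Nat.card (GrothendieckTopology (SimplexCategory.Truncated n)) = n + 2 := by
  have hT : Function.Bijective fun m : Fin (n + 2) => lenTopology n m := by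
    refine ⟨fun a b hab => Fin.ext (le_antisymm ?_ ?_), fun J => ?_⟩
    · exact le_of_lenTopology_le (by omega) hab.ge
    · exact le_of_lenTopology_le (by omega) hab.le
    · obtain ⟨m, hm, rfl⟩ := exists_eq_lenTopology J
      exact ⟨⟨m, by omega⟩, rfl⟩
  refine ⟨_, fun m X S => Iff.rfl, hT, ?_⟩
  rw [← Nat.card_eq_of_bijective _ hT, Nat.card_eq_fintype_card, Fintype.card_fin]
end

section
/- Let Δ₊ be the semi-simplex category. For every w : ℕ → Bool, the assignment declaring a sieve S on [k] to be covering if and only if every morphism f : [l] ⟶ [k] with w l = false belongs to S, defines a Grothendieck topology J_w on Δ₊; moreover the map w ↦ J_w is a bijection from ℕ → Bool onto the set of all Grothendieck topologies on Δ₊. -/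
open CategoryTheory Simplicial Opposite CategoryTheory.GrothendieckTopology

universe w

/-- The semi-simplex category: the wide subcategory of `SimplexCategory`
whose morphisms are the monomorphisms. -/
abbrev SemiSimplexCat : Type :=
  WideSubcategory (MorphismProperty.monomorphisms SimplexCategory)

/-- The coface map `δ i : [k] ⟶ [k+1]` as a morphism of the semi-simplex category. -/
def semiδ {k : ℕ} (i : Fin (k + 2)) : (⟨⦋k⦌⟩ : SemiSimplexCat) ⟶ ⟨⦋k + 1⦌⟩ :=
  ⟨SimplexCategory.δ i, inferInstanceAs (Mono (SimplexCategory.δ i))⟩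

/-!
Every morphism of `Δ₊` other than an identity strictly raises the dimension, so a sieve on `[k]`
either contains `𝟙 [k]` (and is maximal) or is contained in the boundary sieve `∂[k]` of all
morphisms from lower dimensions. A topology `J` is therefore recorded by the set of `k` for which
`∂[k]` covers `[k]`. Conversely, by strong induction on `k` and local character, a sieve lies in `J`
as soon as it contains every morphism out of a dimension at which the boundary does not cover.
-/

namespace SemiSimplexCat

lemma len_le_of_hom {X Y : SemiSimplexCat} (f : X ⟶ Y) : X.obj.len ≤ Y.obj.len :=
  @SimplexCategory.len_le_of_mono _ _ f.1 f.2

lemma eq_of_len_eq {X Y : SemiSimplexCat} (h : X.obj.len = Y.obj.len) : X = Y := by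
  cases X; cases Y; cases SimplexCategory.ext h; rfl

lemma mk_len (X : SemiSimplexCat) : (⟨⦋X.obj.len⦌⟩ : SemiSimplexCat) = X :=
  eq_of_len_eq (SimplexCategory.len_mk _)

lemma hom_eq_id {X : SemiSimplexCat} (f : X ⟶ X) : f = 𝟙 X :=
  have : Mono f.1 := f.2
  WideSubcategory.hom_ext (h := SimplexCategory.eq_id_of_mono f.1)

def boundarySieve (X : SemiSimplexCat) : Sieve X where
  arrows Y _ := Y.obj.len < X.obj.len
  downward_closed hf g := (len_le_of_hom g).trans_lt hf

lemma le_boundarySieve {X : SemiSimplexCat} {S : Sieve X} (h : ¬ S.arrows (𝟙 X)) :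
    S ≤ boundarySieve X := by
  intro Y f hf
  refine (len_le_of_hom f).lt_of_ne fun hlen => h ?_
  obtain rfl := eq_of_len_eq hlen
  rwa [← hom_eq_id f]

def topology (w : ℕ → Bool) : GrothendieckTopology SemiSimplexCat where
  sieves X := {S | ∀ (Y : SemiSimplexCat) (f : Y ⟶ X), w Y.obj.len = false → S.arrows f}
  top_mem' _ _ _ _ := trivial
  pullback_stable' _ _ _ g hS Z f hf := hS Z (f ≫ g) hf
  transitive' _ _ hS _ hR Y f hf := by
    simpa using hR (hS Y f hf) Y (𝟙 Y) hf

lemma boundarySieve_mem_topology_iff (w : ℕ → Bool) (X : SemiSimplexCat) :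
    boundarySieve X ∈ topology w X ↔ w X.obj.len = true := by
  refine ⟨fun h => ?_, fun hw Y f hf => ?_⟩
  · by_contra hw
    exact lt_irrefl _ (h X (𝟙 X) (by simpa using hw))
  · refine (len_le_of_hom f).lt_of_ne fun hlen => ?_
    simp [hlen, hw] at hf

open scoped Classical in
noncomputable def boundaryCovering (J : GrothendieckTopology SemiSimplexCat) (k : ℕ) : Bool :=
  decide (boundarySieve ⟨⦋k⦌⟩ ∈ J ⟨⦋k⦌⟩)

open scoped Classical in
lemma boundaryCovering_len_iff (J : GrothendieckTopology SemiSimplexCat) (X : SemiSimplexCat) :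
    boundaryCovering J X.obj.len = true ↔ boundarySieve X ∈ J X := by
  rw [boundaryCovering, decide_eq_true_iff, mk_len]

lemma boundaryCovering_topology (w : ℕ → Bool) : boundaryCovering (topology w) = w := by
  funext k
  have h := (boundaryCovering_len_iff _ ⟨⦋k⦌⟩).trans (boundarySieve_mem_topology_iff w ⟨⦋k⦌⟩)
  rwa [SimplexCategory.len_mk, ← Bool.eq_iff_iff] at h

theorem mem_of_forall_not_boundaryCovering (J : GrothendieckTopology SemiSimplexCat)
    (X : SemiSimplexCat) (S : Sieve X)
    (hS : ∀ (Y : SemiSimplexCat) (f : Y ⟶ X), boundaryCovering J Y.obj.len = false → S.arrows f) :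
    S ∈ J X := by
  by_cases hX : boundaryCovering J X.obj.len = true
  · refine J.transitive ((boundaryCovering_len_iff J X).1 hX) S fun Y f hf => ?_
    exact mem_of_forall_not_boundaryCovering J Y _ fun Z g hg => hS Z (g ≫ f) hg
  · rw [Sieve.id_mem_iff_eq_top.mp (hS X (𝟙 X) (by simpa using hX))]
    exact J.top_mem X
termination_by X.obj.len
decreasing_by exact hf

lemma topology_boundaryCovering (J : GrothendieckTopology SemiSimplexCat) :
    topology (boundaryCovering J) = J := by
  refine le_antisymm (fun X S hS => mem_of_forall_not_boundaryCovering J X S hS) ?_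
  intro X S hS Y f hf
  by_contra hfS
  have hbd : boundarySieve Y ∈ J Y :=
    J.superset_covering (le_boundarySieve (by simpa using hfS)) (J.pullback_stable f hS)
  simp [← boundaryCovering_len_iff, hf] at hbd

end SemiSimplexCat

open SemiSimplexCat in
theorem stmt5 :
    ∃ T : (ℕ → Bool) → GrothendieckTopology SemiSimplexCat,
      (∀ (w : ℕ → Bool) (X : SemiSimplexCat) (S : Sieve X),
        S ∈ T w X ↔ ∀ (Y : SemiSimplexCat) (f : Y ⟶ X), w Y.obj.len = false → S.arrows f) ∧
      Function.Bijective T :=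
  ⟨topology, fun _ _ _ => Iff.rfl,
    Function.bijective_iff_has_inverse.2
      ⟨boundaryCovering, boundaryCovering_topology, topology_boundaryCovering⟩⟩
end

section
/- For every m ∈ ℕ∞ (i.e. m ∈ WithTop ℕ), the assignment declaring a sieve S on [k] to be covering if and only if every morphism f : [l] ⟶ [k] with (l : ℕ∞) < m belongs to S, defines a Grothendieck topology J_m on the simplex category; moreover the map m ↦ J_m is a bijection from ℕ∞ onto the set of all Grothendieck topologies on the simplex category (m = 0 gives the trivial topology in which every sieve covers, and m = ∞ gives the discrete topology in which only maximal sieves cover). -/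
/-!
A sieve on `⦋n⦌` that contains an epimorphism contains its section, hence the identity; so every
non-maximal sieve lies in the boundary sieve `∂Δ[n]`. Consequently, for a topology `J`, the
dimensions in which `∂Δ[n]` covers are exactly those of the simplices missed by some covering
sieve, and they form an upper set (pull back along an epimorphism `⦋w⦌ ⟶ ⦋n⦌`). Let `m` be its
least element (`⊤` if it is empty). Every `J`-covering sieve contains all simplices of dimension
`< m`; conversely the sieve of these simplices covers, by induction on dimension, covering each
top simplex by its boundary. So `J = J_m`, and `m` is read off from `J_m` in the same way.
-/

open CategoryTheory Simplicial

namespace SimplexCategory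

/-- Viewing sieves on `X` as subcomplexes of `Δ[X]`, this is the skeleton `sk_{m-1} Δ[X]`; in
particular `boundarySieve X` is `∂Δ[X]`. -/
def sieveLenLt (m : ℕ∞) (X : SimplexCategory) : Sieve X :=
  Sieve.generate fun Y _ => (Y.len : ℕ∞) < m

def lenLtTopology (m : ℕ∞) : GrothendieckTopology SimplexCategory where
  sieves X := {S | ∀ (Y : SimplexCategory) (f : Y ⟶ X), (Y.len : ℕ∞) < m → S.arrows f}
  top_mem' _ _ _ _ := trivial
  pullback_stable' _ _ _ g hS Z f hZ := hS Z (f ≫ g) hZ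
  transitive' _ _ hS _ hR Y f hf := by
    simpa using hR (hS Y f hf) Y (𝟙 Y) hf

def boundarySieve (X : SimplexCategory) : Sieve X :=
  sieveLenLt X.len X

variable {m : ℕ∞} {X Y W : SimplexCategory}

theorem mem_lenLtTopology_iff {S : Sieve X} :
    S ∈ lenLtTopology m X ↔ sieveLenLt m X ≤ S :=
  (Sieve.generate_le_iff _ _).symm

theorem sieveLenLt_eq_top (h : (X.len : ℕ∞) < m) : sieveLenLt m X = ⊤ :=
  Sieve.id_mem_iff_eq_top.mp ⟨X, 𝟙 X, 𝟙 X, h, Category.id_comp _⟩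

theorem sieveLenLt_le_pullback (h : Y ⟶ X) :
    sieveLenLt m Y ≤ (sieveLenLt m X).pullback h := by
  rintro _ _ ⟨Z, a, b, hZ, rfl⟩
  exact ⟨Z, a, b ≫ h, hZ, by simp⟩

theorem lenLtTopology_zero : lenLtTopology 0 = ⊤ := by
  ext X S
  simp only [GrothendieckTopology.top_covering, iff_true]
  exact fun Y _ h => (not_lt_zero h).elim

theorem lenLtTopology_top : lenLtTopology ⊤ = ⊥ := by
  ext X S
  rw [GrothendieckTopology.bot_covering, mem_lenLtTopology_iff,
    sieveLenLt_eq_top (ENat.natCast_lt_top _), top_le_iff]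

theorem boundarySieve_apply (f : Y ⟶ X) : boundarySieve X f ↔ ¬Epi f := by
  constructor
  · rintro ⟨Z, g, h, hZ, rfl⟩ hf
    have := epi_of_epi g h
    have hZX : Z.len < X.len := by exact_mod_cast hZ
    exact hZX.not_ge (len_le_of_epi h)
  · intro hf
    rw [epi_iff_surjective] at hf
    rcases hX : X.len with _ | n
    · exact absurd (fun y => ⟨0, Fin.ext (by omega)⟩) hf -- every map into `⦋0⦌` is onto
    · obtain rfl : X = ⦋n + 1⦌ := hX ▸ (mk_len X).symm
      obtain ⟨i, g, rfl⟩ := eq_comp_δ_of_not_surjective f hf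
      exact ⟨⦋n⦌, g, δ i, by simp [ENat.lt_add_one_iff], rfl⟩

theorem le_boundarySieve_of_ne_top {R : Sieve X} (hR : R ≠ ⊤) : R ≤ boundarySieve X := by
  intro Y f hf
  rw [boundarySieve_apply]
  intro hf'
  have := isSplitEpi_of_epi f
  exact hR (Sieve.id_mem_iff_eq_top.mp (by simpa using R.downward_closed hf (section_ f)))

theorem exists_epi_of_len_le (h : X.len ≤ W.len) : ∃ p : W ⟶ X, Epi p := by
  refine ⟨Hom.mk ⟨fun x => ⟨min x X.len, by omega⟩, fun a b hab => ?_⟩, ?_⟩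
  · simp only [Fin.mk_le_mk]
    exact min_le_min_right _ hab
  · rw [epi_iff_surjective]
    intro y
    have := y.isLt
    exact ⟨⟨y, by omega⟩, Fin.ext (show min (y : ℕ) X.len = y by omega)⟩

theorem boundarySieve_mem_lenLtTopology_iff :
    boundarySieve X ∈ lenLtTopology m X ↔ m ≤ X.len := by
  constructor
  · intro h
    by_contra! hX
    exact (boundarySieve_apply (𝟙 X)).mp (h X (𝟙 X) hX) inferInstance
  · intro hm Y f hY
    exact ⟨Y, 𝟙 Y, f, by exact_mod_cast hY.trans_le hm, Category.id_comp f⟩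

section Topology

variable {J : GrothendieckTopology SimplexCategory}

theorem boundarySieve_mem_of_ne_top {R : Sieve X} (hR : R ∈ J X) (hne : R ≠ ⊤) :
    boundarySieve X ∈ J X :=
  J.superset_covering (le_boundarySieve_of_ne_top hne) hR

theorem boundarySieve_mem_of_not_mem {S : Sieve X} (hS : S ∈ J X) {f : Y ⟶ X}
    (hf : ¬S f) : boundarySieve Y ∈ J Y :=
  boundarySieve_mem_of_ne_top (J.pullback_stable f hS)
    (by rwa [Ne, ← Sieve.mem_iff_pullback_eq_top])

theorem boundarySieve_mem_of_len_le (hX : boundarySieve X ∈ J X) (h : X.len ≤ W.len) :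
    boundarySieve W ∈ J W := by
  obtain ⟨p, hp⟩ := exists_epi_of_len_le h
  refine boundarySieve_mem_of_ne_top (J.pullback_stable p hX) ?_
  rw [Ne, ← Sieve.id_mem_iff_eq_top, Sieve.pullback_apply, Category.id_comp,
    boundarySieve_apply, not_not]
  exact hp

theorem sieveLenLt_mem (h : ∀ W : SimplexCategory, m ≤ W.len → boundarySieve W ∈ J W)
    (X : SimplexCategory) : sieveLenLt m X ∈ J X := by
  induction hn : X.len using Nat.strong_induction_on generalizing X with
  | _ n ih =>
    by_cases hX : (X.len : ℕ∞) < m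
    · rw [sieveLenLt_eq_top hX]
      exact J.top_mem X
    refine J.transitive (h X (not_lt.mp hX)) _ ?_
    rintro Y _ ⟨Z, g, k, hZ, rfl⟩
    rw [Sieve.pullback_comp]
    refine J.pullback_stable g (J.superset_covering (sieveLenLt_le_pullback k) ?_)
    exact ih Z.len (hn ▸ by exact_mod_cast hZ) Z rfl

noncomputable def boundaryCoverLen (J : GrothendieckTopology SimplexCategory) : ℕ∞ :=
  ⨅ (X : SimplexCategory) (_ : boundarySieve X ∈ J X), (X.len : ℕ∞)

theorem boundarySieve_mem_of_boundaryCoverLen_le (h : boundaryCoverLen J ≤ W.len) :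
    boundarySieve W ∈ J W := by
  have hlt : boundaryCoverLen J < (W.len + 1 : ℕ) :=
    h.trans_lt (by exact_mod_cast W.len.lt_succ_self)
  obtain ⟨X, hX, hXW⟩ := by simpa only [boundaryCoverLen, iInf_lt_iff] using hlt
  exact boundarySieve_mem_of_len_le hX (Nat.lt_succ_iff.mp (by exact_mod_cast hXW))

theorem lenLtTopology_boundaryCoverLen (J : GrothendieckTopology SimplexCategory) :
    lenLtTopology (boundaryCoverLen J) = J := by
  ext X S
  constructor
  · intro hS
    exact J.superset_covering (mem_lenLtTopology_iff.mp hS)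
      (sieveLenLt_mem (fun W => boundarySieve_mem_of_boundaryCoverLen_le) X)
  · intro hS Y f hY
    by_contra hf
    exact hY.not_ge (iInf₂_le Y (boundarySieve_mem_of_not_mem hS hf))

end Topology

theorem boundaryCoverLen_lenLtTopology (m : ℕ∞) : boundaryCoverLen (lenLtTopology m) = m := by
  simp only [boundaryCoverLen, boundarySieve_mem_lenLtTopology_iff]
  refine le_antisymm ?_ (le_iInf₂ fun _ h => h)
  induction m using ENat.recTopCoe with
  | top => exact le_top
  | coe k => exact iInf₂_le ⦋k⦌ (by simp)

end SimplexCategory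

open SimplexCategory in
theorem stmt6 :
    ∃ T : ℕ∞ → GrothendieckTopology SimplexCategory,
      (∀ (m : ℕ∞) (X : SimplexCategory) (S : Sieve X),
        S ∈ T m X ↔ ∀ (Y : SimplexCategory) (f : Y ⟶ X), (Y.len : ℕ∞) < m → S.arrows f) ∧
      Function.Bijective T ∧
      (∀ (X : SimplexCategory) (S : Sieve X), S ∈ T 0 X) ∧
      (∀ (X : SimplexCategory) (S : Sieve X), S ∈ T ⊤ X ↔ S = ⊤) := by
  refine ⟨lenLtTopology, fun _ _ _ => Iff.rfl, ?_, ?_, ?_⟩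
  · exact Function.bijective_iff_has_inverse.mpr
      ⟨boundaryCoverLen, boundaryCoverLen_lenLtTopology, lenLtTopology_boundaryCoverLen⟩
  · simp [lenLtTopology_zero]
  · simp [lenLtTopology_top]
end

section
/- Let C be a category with exactly three objects v, e, e′ such that: the only endomorphism of each object is its identity, the hom-sets C(v, e) and C(v, e′) each contain exactly two morphisms, and the hom-sets C(e, v), C(e′, v), C(e, e′), C(e′, e) are all empty. Then the set of Grothendieck topologies on C has exactly 8 elements. -/
/-!
Call `o` the centre of a fan if every endomorphism is an identity and every arrow between
distinct objects starts at `o`; the index category of bicoloured graphs is a fan with centre `vo`.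
In a fan a sieve `S ≠ ⊤` on `X` lies in the sieve `noReturn X` of arrows admitting no arrow back,
all of which start at `o`, and `noReturn o = ⊥`. So a topology `J` is determined by the
predicate `t X := noReturn X ∈ J X`: `S` covers `X` iff `S = ⊤`, or `t X` holds and either `t o`
(i.e. `⊥` covers `o`) or `noReturn X ≤ S`. Conversely every `t : C → Prop` defines a topology by
this rule, so topologies correspond to the `2 ^ 3 = 8` subsets of the objects.
-/

open CategoryTheory

universe v u

namespace CategoryTheory

variable {C : Type u} [Category.{v} C]

namespace Sieve

def noReturn (X : C) : Sieve X where
  arrows Y _ := IsEmpty (X ⟶ Y)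
  downward_closed hf g := ⟨fun h => hf.false (h ≫ g)⟩

lemma noReturn_ne_top (X : C) : noReturn X ≠ ⊤ := fun h =>
  (id_mem_iff_eq_top.mpr h : IsEmpty (X ⟶ X)).false (𝟙 X)

lemma le_noReturn_of_ne_top {X : C} (hX : ∀ f : X ⟶ X, f = 𝟙 X) {S : Sieve X} (hS : S ≠ ⊤) :
    S ≤ noReturn X := fun _ f hf =>
  ⟨fun g => hS (id_mem_iff_eq_top.mp (hX (g ≫ f) ▸ S.downward_closed hf g))⟩

end Sieve

open Sieve

structure IsFan (o : C) : Prop where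
  endo_eq_id : ∀ {X : C} (f : X ⟶ X), f = 𝟙 X
  src_eq_of_ne : ∀ {X Y : C}, X ≠ Y → (X ⟶ Y) → X = o

def fanCovering (o : C) (t : C → Prop) (X : C) (S : Sieve X) : Prop :=
  S = ⊤ ∨ (t X ∧ (t o ∨ noReturn X ≤ S))

namespace IsFan

variable {o : C}

lemma isEmpty_hom_of_ne (hC : IsFan o) {X Y : C} (hXY : X ≠ Y) (f : X ⟶ Y) :
    IsEmpty (Y ⟶ X) :=
  ⟨fun g => hXY ((hC.src_eq_of_ne hXY f).trans (hC.src_eq_of_ne hXY.symm g).symm)⟩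

lemma eq_of_mem_noReturn (hC : IsFan o) {X Y : C} {f : Y ⟶ X} (hf : noReturn X f) : Y = o :=
  hC.src_eq_of_ne (fun h => by subst h; exact hf.false (𝟙 Y)) f

lemma noReturn_eq_bot (hC : IsFan o) : noReturn o = ⊥ := by
  refine Sieve.ext fun Y f => ⟨fun hf => ?_, False.elim⟩
  obtain rfl := hC.eq_of_mem_noReturn hf
  exact hf.false (𝟙 Y)

lemma sieve_eq_bot_or_eq_top (hC : IsFan o) (S : Sieve o) : S = ⊥ ∨ S = ⊤ :=
  or_iff_not_imp_right.mpr fun hS =>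
    le_bot_iff.mp (hC.noReturn_eq_bot ▸ le_noReturn_of_ne_top hC.endo_eq_id hS)

lemma mem_iff_fanCovering (hC : IsFan o) (J : GrothendieckTopology C) {X : C} (S : Sieve X) :
    S ∈ J X ↔ fanCovering o (fun X => noReturn X ∈ J X) X S := by
  constructor
  · intro hS
    by_cases hT : S = ⊤
    · exact Or.inl hT
    refine Or.inr ⟨J.superset_covering (le_noReturn_of_ne_top hC.endo_eq_id hT) hS,
      or_iff_not_imp_left.mpr fun ho Y f hf => ?_⟩
    obtain rfl := hC.eq_of_mem_noReturn hf
    rcases hC.sieve_eq_bot_or_eq_top (S.pullback f) with h | h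
    · exact absurd (J.pullback_stable f hS) (by rw [h, ← hC.noReturn_eq_bot]; exact ho)
    · exact (mem_iff_pullback_eq_top f).mpr h
  · rintro (rfl | ⟨hX, ho | hle⟩)
    · exact J.top_mem X
    · refine J.transitive hX S fun Y f hf => ?_
      obtain rfl := hC.eq_of_mem_noReturn hf
      exact J.superset_covering bot_le (hC.noReturn_eq_bot ▸ (ho : noReturn Y ∈ J Y))
    · exact J.superset_covering hle hX

lemma fanCovering_pullback (hC : IsFan o) (t : C → Prop) {X Y : C} {S : Sieve X} (f : Y ⟶ X)
    (hS : fanCovering o t X S) : fanCovering o t Y (S.pullback f) := by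
  rcases hS with rfl | ⟨hX, hS⟩
  · exact Or.inl pullback_top
  by_cases hYX : Y = X
  · subst hYX
    rw [hC.endo_eq_id f, pullback_id]
    exact Or.inr ⟨hX, hS⟩
  obtain rfl := hC.src_eq_of_ne hYX f
  rcases hS with ho | hle
  · exact Or.inr ⟨ho, Or.inl ho⟩
  · exact Or.inl ((mem_iff_pullback_eq_top f).mp (hle f (hC.isEmpty_hom_of_ne hYX f)))

lemma fanCovering_transitive (hC : IsFan o) (t : C → Prop) {X : C} {S : Sieve X}
    (hS : fanCovering o t X S) (R : Sieve X)
    (hR : ∀ ⦃Y⦄ ⦃f : Y ⟶ X⦄, S f → fanCovering o t Y (R.pullback f)) :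
    fanCovering o t X R := by
  rcases hS with rfl | ⟨hX, hS⟩
  · simpa only [pullback_id] using hR (f := 𝟙 X) trivial
  refine Or.inr ⟨hX, or_iff_not_imp_left.mpr fun ho Y f hf => ?_⟩
  obtain rfl := hC.eq_of_mem_noReturn hf
  rcases hR (hS.resolve_left ho f hf) with h | ⟨hY, -⟩
  · exact (mem_iff_pullback_eq_top f).mpr h
  · exact absurd hY ho

def topology (hC : IsFan o) (t : C → Prop) : GrothendieckTopology C where
  sieves X := {S | fanCovering o t X S}
  top_mem' _ := Or.inl rfl
  pullback_stable' _ _ _ f hS := hC.fanCovering_pullback t f hS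
  transitive' _ _ hS R hR := hC.fanCovering_transitive t hS R hR

def topologyEquiv (hC : IsFan o) : GrothendieckTopology C ≃ (C → Prop) where
  toFun J X := noReturn X ∈ J X
  invFun := hC.topology
  left_inv J := GrothendieckTopology.ext <| funext fun _ =>
    Set.ext fun S => (hC.mem_iff_fanCovering J S).symm
  right_inv t := funext fun X => propext <| by
    change fanCovering o t X (noReturn X) ↔ t X
    simp [fanCovering, noReturn_ne_top]

end IsFan

end CategoryTheory

theorem stmt11_general {C : Type u} [Category.{v} C] (vo e e' : C)
    (hdist : vo ≠ e ∧ vo ≠ e' ∧ e ≠ e')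
    (hall : ∀ x : C, x = vo ∨ x = e ∨ x = e')
    (hEndV : ∀ f : vo ⟶ vo, f = 𝟙 vo)
    (hEndE : ∀ f : e ⟶ e, f = 𝟙 e)
    (hEndE' : ∀ f : e' ⟶ e', f = 𝟙 e')
    (hEV : IsEmpty (e ⟶ vo)) (hE'V : IsEmpty (e' ⟶ vo))
    (hEE' : IsEmpty (e ⟶ e')) (hE'E : IsEmpty (e' ⟶ e)) :
    Nat.card (GrothendieckTopology C) = 8 := by
  have hC : IsFan vo := by
    refine ⟨fun {X} f => ?_, fun {X Y} hXY f => ?_⟩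
    · rcases hall X with rfl | rfl | rfl
      exacts [hEndV f, hEndE f, hEndE' f]
    · rcases hall X with rfl | rfl | rfl <;> rcases hall Y with rfl | rfl | rfl <;>
        first | rfl | exact absurd rfl hXY | exact isEmptyElim f
  have hcard : Nat.card C = 3 := by
    rw [← Set.ncard_univ, Set.ncard_eq_three]
    exact ⟨vo, e, e', hdist.1, hdist.2.1, hdist.2.2,
      (Set.eq_univ_of_forall fun x => by simpa only [Set.mem_insert_iff,
        Set.mem_singleton_iff] using hall x).symm⟩
  have : Finite C := Nat.finite_of_card_ne_zero (by omega)
  rw [Nat.card_congr hC.topologyEquiv, Nat.card_fun, hcard, Nat.card_eq_fintype_card,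
    Fintype.card_prop]
  rfl

theorem stmt11 {C : Type u} [Category.{v} C] (vo e e' : C)
    (hdist : vo ≠ e ∧ vo ≠ e' ∧ e ≠ e')
    (hall : ∀ x : C, x = vo ∨ x = e ∨ x = e')
    (hEndV : ∀ f : vo ⟶ vo, f = 𝟙 vo)
    (hEndE : ∀ f : e ⟶ e, f = 𝟙 e)
    (hEndE' : ∀ f : e' ⟶ e', f = 𝟙 e')
    (hVE : Nat.card (vo ⟶ e) = 2)
    (hVE' : Nat.card (vo ⟶ e') = 2)
    (hEV : IsEmpty (e ⟶ vo)) (hE'V : IsEmpty (e' ⟶ vo))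
    (hEE' : IsEmpty (e ⟶ e')) (hE'E : IsEmpty (e' ⟶ e)) :
    Nat.card (GrothendieckTopology C) = 8 :=
  stmt11_general vo e e' hdist hall hEndV hEndE hEndE' hEV hE'V hEE' hE'E
end

section
/- Let L be a Heyting algebra, φ : L → L a nucleus on L, B a type, and β : B → L. Then every value of β lies in the range of φ (i.e. ∀ b, β b ∈ Set.range φ) if and only if: for every type A, all functions α, α′ : A → L and f : A → B such that α′ a ≤ α a for all a, α a ≤ φ (α′ a) for all a, and α′ a ≤ β (f a) for all a, one has α a ≤ β (f a) for all a. -/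
universe v

theorem stmt17 {L : Type*} [HeytingAlgebra L] (φ : L → L)
    (hmeet : ∀ a b : L, φ (a ⊓ b) = φ a ⊓ φ b)
    (hincr : ∀ a : L, a ≤ φ a)
    (hidem : ∀ a : L, φ (φ a) ≤ φ a)
    {B : Type*} (β : B → L) :
    (∀ b : B, β b ∈ Set.range φ) ↔
      ∀ (A : Type v) (α α' : A → L) (f : A → B),
        (∀ a, α' a ≤ α a) → (∀ a, α a ≤ φ (α' a)) → (∀ a, α' a ≤ β (f a)) →
        ∀ a, α a ≤ β (f a) := by
  have hmono : ∀ a b : L, a ≤ b → φ a ≤ φ b := by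
    intro a b hab
    have : φ (a ⊓ b) = φ a ⊓ φ b := hmeet a b
    rw [inf_eq_left.mpr hab] at this
    rw [this]
    exact inf_le_right
  constructor
  · intro hβ A α α' f _ h2 h3 a
    obtain ⟨x, hx⟩ := hβ (f a)
    calc α a ≤ φ (α' a) := h2 a
      _ ≤ φ (β (f a)) := hmono _ _ (h3 a)
      _ = φ (φ x) := by rw [hx]
      _ ≤ φ x := hidem x
      _ = β (f a) := hx
  · intro h b
    have := h PUnit (fun _ => φ (β b)) (fun _ => β b) (fun _ => b)
      (fun _ => hincr _) (fun _ => le_rfl) (fun _ => le_rfl) PUnit.unit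
    exact ⟨β b, le_antisymm this (hincr _)⟩
end

section
/- The walking parallel pair category (objects zero and one, with two non-identity morphisms left, right : zero ⟶ one) has exactly 4 Grothendieck topologies. -/
open CategoryTheory CategoryTheory.Limits

/-!
Every sieve on `zero` is `⊤` or `⊥`, and a sieve on `one` either contains `𝟙 one` or lies in
the sieve `{left, right}`. Pulling back along `left` and `right`, and using transitivity over
`{left, right}`, shows that a topology is determined by two truth values that can be chosen
independently: whether `⊥` covers `zero` and whether `{left, right}` covers `one`.
-/

namespace CategoryTheory.GrothendieckTopology

variable {C : Type*} [Category C] (J : GrothendieckTopology C)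

theorem mem_iff_forall_pullback_mem {X : C} {R : Sieve X} (hR : R ∈ J X) (S : Sieve X) :
    S ∈ J X ↔ ∀ ⦃Y⦄ ⦃f : Y ⟶ X⦄, R f → S.pullback f ∈ J Y :=
  ⟨fun hS _ f _ => J.pullback_stable f hS, J.transitive hR S⟩

end CategoryTheory.GrothendieckTopology

namespace CategoryTheory.Limits.WalkingParallelPair

open WalkingParallelPairHom

theorem eq_zero_of_hom_zero {X : WalkingParallelPair} (f : X ⟶ zero) : X = zero := by
  change WalkingParallelPairHom _ _ at f
  cases f; rfl

theorem sieve_zero_eq_bot {S : Sieve zero} (h : ¬ S (𝟙 zero)) : S = ⊥ := by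
  ext Y f
  change WalkingParallelPairHom _ _ at f
  cases f
  exact iff_of_false h id

/-- The sieve `{left, right}`: the largest proper sieve on `one`. -/
def sieveFromZero : Sieve one where
  arrows Y _ := Y = zero
  downward_closed hf g := eq_zero_of_hom_zero (g ≫ eqToHom hf)

theorem le_sieveFromZero {S : Sieve one} (h : ¬ S (𝟙 one)) : S ≤ sieveFromZero := by
  intro Y f hf
  change WalkingParallelPairHom _ _ at f
  cases f with
  | id => exact absurd hf h
  | _ => rfl

theorem forall_mem_sieveFromZero {P : ∀ ⦃Y⦄, (Y ⟶ one) → Prop} :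
    (∀ ⦃Y⦄ ⦃f : Y ⟶ one⦄, sieveFromZero f → P f) ↔ P left ∧ P right := by
  refine ⟨fun h => ⟨h rfl, h rfl⟩, ?_⟩
  rintro ⟨hl, hr⟩ Y f (rfl : Y = zero)
  change WalkingParallelPairHom _ _ at f
  cases f <;> assumption

def topologyOf (p q : Prop) : GrothendieckTopology WalkingParallelPair where
  sieves
    | zero => {S | S (𝟙 zero) ∨ p}
    | one => {S | S (𝟙 one) ∨ q ∧ (S left ∨ p) ∧ (S right ∨ p)}
  top_mem' X := by cases X <;> exact Or.inl trivial
  pullback_stable' {X Y S} f hS := by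
    change WalkingParallelPairHom _ _ at f
    cases f with
    | id => simpa using hS
    | left =>
      rcases hS with h | ⟨-, h, -⟩
      · exact Or.inl (by simpa using S.downward_closed h left)
      · simpa using h
    | right =>
      rcases hS with h | ⟨-, -, h⟩
      · exact Or.inl (by simpa using S.downward_closed h right)
      · simpa using h
  transitive' {X S} hS R hR := by
    cases X with
    | zero =>
      rcases hS with h | hp
      · simpa using hR h
      · exact Or.inr hp
    | one =>
      rcases hS with h | ⟨hq, hl, hr⟩
      · simpa using hR h
      · exact Or.inr ⟨hq, hl.elim (fun h => by simpa using hR h) Or.inr,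
          hr.elim (fun h => by simpa using hR h) Or.inr⟩

section

variable {p q : Prop}

@[simp]
theorem mem_topologyOf_zero {S : Sieve zero} : S ∈ topologyOf p q zero ↔ S (𝟙 zero) ∨ p :=
  Iff.rfl

@[simp]
theorem mem_topologyOf_one {S : Sieve one} :
    S ∈ topologyOf p q one ↔ S (𝟙 one) ∨ q ∧ (S left ∨ p) ∧ (S right ∨ p) :=
  Iff.rfl

end

variable (J : GrothendieckTopology WalkingParallelPair)

theorem mem_zero_iff (S : Sieve zero) : S ∈ J zero ↔ S (𝟙 zero) ∨ ⊥ ∈ J zero := by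
  by_cases hS : S (𝟙 zero)
  · simp [Sieve.id_mem_iff_eq_top.mp hS]
  · simp [sieve_zero_eq_bot hS]

theorem mem_one_iff (S : Sieve one) :
    S ∈ J one ↔ S (𝟙 one) ∨
      sieveFromZero ∈ J one ∧ (S left ∨ ⊥ ∈ J zero) ∧ (S right ∨ ⊥ ∈ J zero) := by
  by_cases hS : S (𝟙 one)
  · simp [Sieve.id_mem_iff_eq_top.mp hS]
  by_cases hF : sieveFromZero ∈ J one
  · rw [J.mem_iff_forall_pullback_mem hF, forall_mem_sieveFromZero,
      mem_zero_iff J (S.pullback left), mem_zero_iff J (S.pullback right)]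
    simp [hS, hF]
  · simp only [hS, hF, false_or, false_and, iff_false]
    exact fun h => hF (J.superset_covering (le_sieveFromZero hS) h)

theorem eq_topologyOf : J = topologyOf (⊥ ∈ J zero) (sieveFromZero ∈ J one) := by
  ext X S
  cases X
  · exact mem_zero_iff J S
  · exact mem_one_iff J S

noncomputable def topologyEquiv : GrothendieckTopology WalkingParallelPair ≃ Prop × Prop where
  toFun J := (⊥ ∈ J zero, sieveFromZero ∈ J one)
  invFun pq := topologyOf pq.1 pq.2
  left_inv J := (eq_topologyOf J).symm
  right_inv pq := by
    ext
    · simp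
    · simp [sieveFromZero]

end CategoryTheory.Limits.WalkingParallelPair

theorem stmt18 : Nat.card (GrothendieckTopology WalkingParallelPair) = 4 := by
  rw [Nat.card_congr WalkingParallelPair.topologyEquiv]
  simp
end

section
/- Let Δ be the simplex category and Δ₊ its wide subcategory of monomorphisms. For every k ∈ ℕ, the map sending a subpresheaf G of the representable presheaf y[k] over Δ to the subpresheaf of the representable presheaf y[k] over Δ₊ whose sections over [l] are the monomorphisms f : [l] ⟶ [k] belonging to G([l]), is a well-defined order isomorphism from the lattice of subpresheaves of y[k] over Δ onto the lattice of subpresheaves of y[k] over Δ₊ (its inverse adds to a semi-simplicial subpresheaf all of its degenerate elements). -/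
/-!
A subpresheaf of `y[k]` is a set of maps into `[k]` closed under precomposition. Every map `f`
factors as a split epimorphism `e` followed by a monomorphism `m`, and `m = s ≫ f` for a section
`s` of `e`, so `f` lies in a subpresheaf exactly when its monomorphic part `m` does. Hence a
subpresheaf is determined by its monomorphic members, and a set of monomorphisms closed under
precomposition with monomorphisms is recovered from the maps factoring through one of them.
Only these factorisations are used, so the argument works in any category with epi–mono
factorisations whose epimorphisms split.
-/

open CategoryTheory Simplicial Opposite CategoryTheory.GrothendieckTopology

namespace CategoryTheory

open Limits

variable {C : Type*} [Category C]

abbrev MonoSubcategory (C : Type*) [Category C] : Type _ :=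
  WideSubcategory (MorphismProperty.monomorphisms C)

namespace Subfunctor

variable {X : C}

def toMonos (G : Subfunctor (yoneda.obj X)) :
    Subfunctor (yoneda.obj (⟨X⟩ : MonoSubcategory C)) where
  obj U := {f | f.1 ∈ G.obj (op U.unop.obj)}
  map i _ hf := G.map i.unop.1.op hf

@[simp]
lemma mem_toMonos_obj (G : Subfunctor (yoneda.obj X)) {U : MonoSubcategory C}
    (f : U ⟶ ⟨X⟩) : f ∈ (toMonos G).obj (op U) ↔ f.1 ∈ G.obj (op U.obj) :=
  Iff.rfl

def ofMonos (H : Subfunctor (yoneda.obj (⟨X⟩ : MonoSubcategory C))) :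
    Subfunctor (yoneda.obj X) where
  obj U := {f | ∃ (V : C) (e : U.unop ⟶ V) (m : (⟨V⟩ : MonoSubcategory C) ⟶ ⟨X⟩),
      e ≫ m.1 = f ∧ m ∈ H.obj (op ⟨V⟩)}
  map i _ := by
    rintro ⟨V, e, m, rfl, hm⟩
    exact ⟨V, i.unop ≫ e, m, Category.assoc _ _ _, hm⟩

lemma toMonos_monotone : Monotone (toMonos : Subfunctor (yoneda.obj X) → _) :=
  fun _ _ h _ _ hf => h _ hf

lemma ofMonos_monotone :
    Monotone (ofMonos : Subfunctor (yoneda.obj (⟨X⟩ : MonoSubcategory C)) → _) := by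
  rintro _ _ h _ _ ⟨V, e, m, hf, hm⟩
  exact ⟨V, e, m, hf, h _ hm⟩

lemma mem_of_isSplitEpi_comp_mem (G : Subfunctor (yoneda.obj X)) {U V : C} (e : U ⟶ V)
    [IsSplitEpi e] (m : V ⟶ X) (h : e ≫ m ∈ G.obj (op U)) : m ∈ G.obj (op V) := by
  simpa using G.map (section_ e).op h

lemma toMonos_ofMonos (H : Subfunctor (yoneda.obj (⟨X⟩ : MonoSubcategory C))) :
    toMonos (ofMonos H) = H := by
  ext U f
  constructor
  · rintro ⟨V, e, m, hf, hm⟩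
    have : Mono (e ≫ m.1) := hf ▸ f.2
    have : Mono e := mono_of_mono e m.1
    let e' : U.unop ⟶ (⟨V⟩ : MonoSubcategory C) := ⟨e, this⟩
    have hf' : (yoneda.obj _).map e'.op m = f := WideSubcategory.hom_ext _ hf
    exact hf' ▸ H.map e'.op hm
  · exact fun hf => ⟨U.unop.obj, 𝟙 _, f, Category.id_comp _, hf⟩

lemma ofMonos_toMonos [HasStrongEpiMonoFactorisations C] [SplitEpiCategory C]
    (G : Subfunctor (yoneda.obj X)) : ofMonos (toMonos G) = G := by
  ext U f
  constructor
  · rintro ⟨V, e, m, rfl, hm⟩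
    exact G.map e.op hm
  · intro hf
    have := isSplitEpi_of_epi (factorThruImage f)
    refine ⟨Limits.image f, factorThruImage f, ⟨image.ι f, inferInstance⟩, image.fac f, ?_⟩
    exact mem_of_isSplitEpi_comp_mem G (factorThruImage f) _ ((image.fac f).symm ▸ hf)

def orderIsoToMonos [HasStrongEpiMonoFactorisations C] [SplitEpiCategory C] (X : C) :
    Subfunctor (yoneda.obj X) ≃o Subfunctor (yoneda.obj (⟨X⟩ : MonoSubcategory C)) :=
  Equiv.toOrderIso ⟨toMonos, ofMonos, ofMonos_toMonos, toMonos_ofMonos⟩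
    toMonos_monotone ofMonos_monotone

end Subfunctor

end CategoryTheory

theorem stmt19 (k : ℕ) :
    ∃ e : Subfunctor (yoneda.obj (⦋k⦌ : SimplexCategory)) ≃o
        Subfunctor (yoneda.obj (⟨⦋k⦌⟩ : SemiSimplexCat)),
      ∀ (G : Subfunctor (yoneda.obj (⦋k⦌ : SimplexCategory)))
        (l : SimplexCategory) (f : (⟨l⟩ : SemiSimplexCat) ⟶ ⟨⦋k⦌⟩),
        f ∈ (e G).obj (op ⟨l⟩) ↔ f.1 ∈ G.obj (op l) :=
  ⟨Subfunctor.orderIsoToMonos ⦋k⦌, fun G _ f => Subfunctor.mem_toMonos_obj G f⟩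
end
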